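/- For a left R-module M, the following conditions are equivalent: (1) M has infinitely many nontrivial submodules and the clique number ω(M) of the intersection graph G(M) is finite; (2) both of the following hold: (i) there exist simple submodules S and S' of M with S ≅ S', S ∩ S' = 0, Soc(M) = S + S', and End(S) an infinite division ring; (ii) all but finitely many submodules of M are contained in Soc(M). -/

import Mathlib

/-- A clique of the intersection graph `G(M)`: a set of nontrivial submodules any two
distinct members of which have nonzero intersection. -/
def IsIntClique {R : Type*} [Ring R] {M : Type*} [AddCommGroup M] [Module R M]
    (C : Set (Submodule R M)) : Prop :=
  (∀ N ∈ C, N ≠ ⊥ ∧ N ≠ ⊤) ∧ ∀ N ∈ C, ∀ K ∈ C, N ≠ K → N ⊓ K ≠ ⊥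

/-- The clique number `ω(M)` of `G(M)`: the supremum of the cardinalities of cliques. -/
noncomputable def cliqueNumber (R : Type*) [Ring R] (M : Type*) [AddCommGroup M]
    [Module R M] : Cardinal :=
  sSup {c : Cardinal | ∃ C : Set (Submodule R M), IsIntClique C ∧ c = Cardinal.mk C}

/-- The socle of a module: the sum of all its simple submodules. -/
def socle (R : Type*) [Ring R] (M : Type*) [AddCommGroup M] [Module R M] :
    Submodule R M :=
  sSup {A : Submodule R M | IsSimpleModule R A}

/-!
A finite clique number makes every up-set `{K | A ≤ K}` with `A ≠ ⊥` and every strictly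
descending chain of submodules a clique; hence `M` is Artinian, only finitely many submodules
contain a given nonzero one, and infinitely many nontrivial submodules force infinitely many
simple ones. A double pigeonhole argument in the modular lattice of submodules puts all simple
submodules inside `S ⊕ S'` for two of them, and one more pigeonhole shows that only finitely many
submodules are not contained in this socle. Inside `S ⊕ S'` every simple submodule other than `S'`
is the graph of a map `S → S'`, an isomorphism unless the graph is `S`; so infinitely many simple
submodules make `End(S)` infinite. Conversely these graphs give infinitely many submodules, and
since the socle has length two, a clique contains at most one of its proper nonzero submodules.
-/

open Set Cardinal

theorem Set.Infinite.exists_infinite_fiber {α β : Type*} {s : Set α} {t : Set β} {f : α → β}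
    (hs : s.Infinite) (hf : MapsTo f s t) (ht : t.Finite) :
    ∃ b ∈ t, (s ∩ f ⁻¹' {b}).Infinite := by
  by_contra! h
  exact hs ((ht.biUnion h).subset fun x hx => mem_biUnion (hf hx) ⟨hx, rfl⟩)

section Atomic

variable {α : Type*} [Lattice α] [OrderBot α] [IsAtomic α] {x y : α}

theorem infinite_setOf_isAtom (h : {x : α | x ≠ ⊥}.Infinite)
    (hfin : ∀ a : α, IsAtom a → {x | a ≤ x}.Finite) : {a : α | IsAtom a}.Infinite :=
  fun hA => h <| (hA.biUnion hfin).subset fun x hx => by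
    obtain ⟨a, ha, hax⟩ := (eq_bot_or_exists_atom_le x).resolve_left hx
    exact mem_biUnion ha hax

theorem inf_ne_bot_of_forall_isAtom_le (hatoms : ∀ c, IsAtom c → c ≤ y) (hx : x ≠ ⊥) :
    x ⊓ y ≠ ⊥ := by
  obtain ⟨c, hc, hcx⟩ := (eq_bot_or_exists_atom_le x).resolve_left hx
  exact ne_bot_of_le_ne_bot hc.ne_bot (le_inf hcx (hatoms c hc))

end Atomic

section ModularLattice

variable {α : Type*} [Lattice α] [OrderBot α] [IsModularLattice α] {a b c d x y : α}

theorem IsAtom.covBy_sup_of_not_le (hb : IsAtom b) (h : ¬ b ≤ a) : a ⋖ a ⊔ b :=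
  covBy_sup_of_inf_covBy_right <| by
    rw [disjoint_iff.mp (hb.not_le_iff_disjoint.mp h).symm]
    exact hb.bot_covBy

theorem eq_bot_or_isAtom_or_eq_sup_of_le_sup (ha : IsAtom a) (hb : IsAtom b) (hx : x ≤ a ⊔ b) :
    x = ⊥ ∨ IsAtom x ∨ x = a ⊔ b := by
  by_cases hax : a ≤ x
  · have hx_eq : x = a ⊔ b ⊓ x := by rw [← sup_inf_assoc_of_le b hax, inf_eq_right.mpr hx]
    rcases hb.le_iff.mp (inf_le_left : b ⊓ x ≤ b) with h | h
    · rw [hx_eq, h, sup_bot_eq]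
      exact Or.inr (Or.inl ha)
    · rw [hx_eq, h]
      exact Or.inr (Or.inr rfl)
  refine or_iff_not_imp_left.mpr fun hx0 => Or.inl ?_
  have hdisj : Disjoint a x := ha.not_le_iff_disjoint.mp hax
  have hxa : ¬ x ≤ a := fun h => hx0 (hdisj.eq_bot_of_ge h)
  have hcov : a ⋖ a ⊔ b := hb.covBy_sup_of_not_le fun h => hxa (hx.trans (sup_eq_left.mpr h).le)
  have hsup : a ⊔ x = a ⊔ b := (hcov.eq_or_eq le_sup_left (sup_le le_sup_left hx)).resolve_left
    fun h => hxa (h ▸ le_sup_right)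
  have := inf_covBy_of_covBy_sup_left (hsup ▸ hcov)
  rwa [hdisj.eq_bot, bot_covBy_iff] at this

theorem sup_eq_of_isAtom_of_sup_le (hc : IsAtom c) (hd : IsAtom d) (hcd : c ≠ d)
    (ha : IsAtom a) (hb : IsAtom b) (h : c ⊔ d ≤ a ⊔ b) : c ⊔ d = a ⊔ b := by
  rcases eq_bot_or_isAtom_or_eq_sup_of_le_sup ha hb h with h | h | h
  · exact absurd (le_bot_iff.mp (h ▸ le_sup_left)) hc.ne_bot
  · exact absurd (((h.le_iff_eq hc.ne_bot).mp le_sup_left).trans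
      ((h.le_iff_eq hd.ne_bot).mp le_sup_right).symm) hcd
  · exact h

/- Infinitely many atoms `c` share the join `V = a ⊔ c`, and any two of them join to `V`. Given an
atom `u`, two of these, `c ≠ d`, have `u ⊔ c = u ⊔ d`, which must then be `c ⊔ d = V`. -/
theorem exists_isAtom_forall_isAtom_le_sup (hinf : {a : α | IsAtom a}.Infinite)
    (hfin : ∀ a : α, IsAtom a → {x | a ≤ x}.Finite) :
    ∃ a b : α, IsAtom a ∧ IsAtom b ∧ a ≠ b ∧ ∀ c, IsAtom c → c ≤ a ⊔ b := by
  obtain ⟨a, ha⟩ := hinf.nonempty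
  obtain ⟨V, -, hV⟩ := (hinf.sdiff (finite_singleton a)).exists_infinite_fiber
    (f := (a ⊔ ·)) (t := {x | a ≤ x}) (fun _ _ => le_sup_left) (hfin a ha)
  set F := ({c : α | IsAtom c} \ {a}) ∩ (a ⊔ ·) ⁻¹' {V}
  have hjoin : ∀ c ∈ F, ∀ d ∈ F, c ≠ d → c ⊔ d = V := by
    rintro c ⟨⟨hc, -⟩, hcV : a ⊔ c = V⟩ d ⟨⟨hd, -⟩, hdV : a ⊔ d = V⟩ hcd
    rw [← hcV]
    exact sup_eq_of_isAtom_of_sup_le hc hd hcd ha hc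
      (sup_le le_sup_right (hcV ▸ hdV ▸ le_sup_right))
  obtain ⟨b, hb⟩ := hV.nonempty
  refine ⟨a, b, ha, hb.1.1, Ne.symm hb.1.2, fun u hu => ?_⟩
  obtain ⟨c, hc, d, hd, hcd, hucd⟩ := hV.exists_ne_map_eq_of_mapsTo (f := (u ⊔ ·))
    (t := {x | u ≤ x}) (fun _ _ => le_sup_left) (hfin u hu)
  have hcd_eq : c ⊔ d = u ⊔ c := sup_eq_of_isAtom_of_sup_le hc.1.1 hd.1.1 hcd hu hc.1.1
    (sup_le le_sup_right (hucd ▸ le_sup_right))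
  rw [show a ⊔ b = V from hb.2, ← hjoin c hc d hd hcd, hcd_eq]
  exact le_sup_left

/- If the two traces on `a ⊔ b` differed, they would be distinct atoms joining to `a ⊔ b`, and
`x ⊓ y` would meet `a ⊔ b` trivially, hence be `⊥`; modularity then pushes `y` into
`a ⊔ b`. -/
theorem inf_eq_inf_of_sup_eq_sup [IsAtomic α] (ha : IsAtom a) (hb : IsAtom b)
    (hatoms : ∀ c, IsAtom c → c ≤ a ⊔ b) (hx : IsAtom (x ⊓ (a ⊔ b)))
    (hy : IsAtom (y ⊓ (a ⊔ b))) (hyV : ¬ y ≤ a ⊔ b)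
    (hxy : x ⊔ (a ⊔ b) = y ⊔ (a ⊔ b)) : x ⊓ (a ⊔ b) = y ⊓ (a ⊔ b) := by
  set V := a ⊔ b
  by_contra hne
  have hst : x ⊓ V ⊔ y ⊓ V = V :=
    sup_eq_of_isAtom_of_sup_le hx hy hne ha hb (sup_le inf_le_right inf_le_right)
  have hxy0 : x ⊓ y = ⊥ := by
    by_contra h
    refine inf_ne_bot_of_forall_isAtom_le hatoms h ?_
    rw [inf_inf_distrib_right]
    exact (hx.disjoint_of_ne hy hne).eq_bot
  have hy_le : y ≤ y ⊓ V ⊔ x := calc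
    y ≤ y ⊔ V := le_sup_left
    _ = x ⊔ (x ⊓ V ⊔ y ⊓ V) := by rw [← hxy, hst]
    _ ≤ y ⊓ V ⊔ x := sup_le le_sup_right (sup_le (inf_le_left.trans le_sup_right) le_sup_left)
  apply hyV
  calc y = (y ⊓ V ⊔ x) ⊓ y := (inf_eq_right.mpr hy_le).symm
    _ = y ⊓ V := by rw [sup_inf_assoc_of_le x inf_le_left, hxy0, sup_bot_eq]
    _ ≤ V := inf_le_right

theorem finite_setOf_not_le_sup [IsAtomic α] (ha : IsAtom a) (hb : IsAtom b)
    (hatoms : ∀ c, IsAtom c → c ≤ a ⊔ b)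
    (hfin : ∀ y : α, y ≠ ⊥ → {x | y ≤ x}.Finite) : {x | ¬ x ≤ a ⊔ b}.Finite := by
  set V := a ⊔ b
  have hV : V ≠ ⊥ := ne_bot_of_le_ne_bot ha.ne_bot le_sup_left
  have hsub : {x | ¬ x ≤ V} ⊆ {x | V ≤ x} ∪ {x | ¬ x ≤ V ∧ IsAtom (x ⊓ V)} := by
    intro x hxV
    have hx0 : x ⊓ V ≠ ⊥ := inf_ne_bot_of_forall_isAtom_le hatoms fun h => hxV (h ▸ bot_le)
    rcases eq_bot_or_isAtom_or_eq_sup_of_le_sup ha hb (inf_le_right : x ⊓ V ≤ V) with h | h | h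
    · exact absurd h hx0
    · exact Or.inr ⟨hxV, h⟩
    · exact Or.inl (inf_eq_right.mp h)
  refine ((hfin V hV).union (not_infinite.mp fun hinf => ?_)).subset hsub
  -- `x ↦ x ⊔ V` takes finitely many values, and `x ⊓ V` is constant on each of its fibers.
  obtain ⟨w, -, hw⟩ := hinf.exists_infinite_fiber (f := (· ⊔ V)) (t := {x | V ≤ x})
    (fun _ _ => le_sup_right) (hfin V hV)
  obtain ⟨x, hx⟩ := hw.nonempty
  refine hw ((hfin _ hx.1.2.ne_bot).subset fun y hy => ?_)
  exact (inf_eq_inf_of_sup_eq_sup ha hb hatoms hx.1.2 hy.1.2 hy.1.1 (hx.2.trans hy.2.symm)).trans_le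
    inf_le_left

end ModularLattice

section Submodules

variable {R : Type*} [Ring R] {M : Type*} [AddCommGroup M] [Module R M]

theorem isIntClique_of_inf_ne_bot {C : Set (Submodule R M)} (hC : ∀ N ∈ C, N ≠ ⊤)
    (h : ∀ N ∈ C, ∀ K ∈ C, N ⊓ K ≠ ⊥) : IsIntClique C :=
  ⟨fun N hN => ⟨by simpa using h N hN N hN, hC N hN⟩, fun N hN K hK _ => h N hN K hK⟩

theorem IsIntClique.finite (hω : cliqueNumber R M < ℵ₀) {C : Set (Submodule R M)}
    (hC : IsIntClique C) : C.Finite := by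
  have hle : #C ≤ cliqueNumber R M :=
    le_csSup ⟨#(Submodule R M), by rintro _ ⟨C, -, rfl⟩; exact mk_set_le C⟩ ⟨C, hC, rfl⟩
  exact lt_aleph0_iff_set_finite.mp (hle.trans_lt hω)

theorem cliqueNumber_le {c : Cardinal}
    (h : ∀ C : Set (Submodule R M), IsIntClique C → #C ≤ c) : cliqueNumber R M ≤ c :=
  csSup_le' (by rintro _ ⟨C, hC, rfl⟩; exact h C hC)

theorem finite_setOf_le_of_cliqueNumber_lt (hω : cliqueNumber R M < ℵ₀) {A : Submodule R M}
    (hA : A ≠ ⊥) : {K | A ≤ K}.Finite := by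
  have hC : IsIntClique {K | A ≤ K ∧ K ≠ ⊤} := isIntClique_of_inf_ne_bot (fun _ hK => hK.2)
    fun _ hN _ hK => ne_bot_of_le_ne_bot hA (le_inf hN.1 hK.1)
  refine ((hC.finite hω).insert ⊤).subset fun K hK => ?_
  by_cases h : K = ⊤
  · exact Or.inl h
  · exact Or.inr ⟨hK, h⟩

theorem wellFoundedLT_of_cliqueNumber_lt (hω : cliqueNumber R M < ℵ₀) :
    WellFoundedLT (Submodule R M) := by
  refine ⟨wellFounded_iff_isEmpty_descending_chain.mpr ⟨fun ⟨f, hf⟩ => ?_⟩⟩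
  have hanti : StrictAnti f := strictAnti_nat_of_succ_lt hf
  refine infinite_range_of_injective (hanti.injective.comp Nat.succ_injective)
    (IsIntClique.finite hω ?_)
  refine isIntClique_of_inf_ne_bot (fun _ ⟨n, hn⟩ => hn ▸ (hanti n.lt_succ_self).ne_top) ?_
  rintro _ ⟨n, rfl⟩ _ ⟨m, rfl⟩
  refine ne_bot_of_le_ne_bot (hanti (Nat.lt_succ_self (max n m + 1))).ne_bot ?_
  exact le_inf (hanti.antitone (by omega)) (hanti.antitone (by omega))

section Graph

variable {N P : Submodule R M}

def graphSubmodule (φ : N →ₗ[R] P) : Submodule R M :=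
  LinearMap.range (N.subtype + P.subtype ∘ₗ φ)

theorem mem_graphSubmodule {φ : N →ₗ[R] P} {x : M} :
    x ∈ graphSubmodule φ ↔ ∃ n : N, (n : M) + φ n = x := by
  simp [graphSubmodule]

theorem graphSubmodule_zero : graphSubmodule (0 : N →ₗ[R] P) = N := by
  simp [graphSubmodule]

theorem graphSubmodule_injective (h : Disjoint N P) :
    Function.Injective (graphSubmodule : (N →ₗ[R] P) → Submodule R M) := by
  intro φ ψ hφψ
  ext n
  obtain ⟨n', hn'⟩ := mem_graphSubmodule.mp (hφψ ▸ mem_graphSubmodule.mpr ⟨n, rfl⟩ :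
    (n : M) + φ n ∈ graphSubmodule ψ)
  have hnn' : (n' : M) = n := by
    refine sub_eq_zero.mp (Submodule.disjoint_def.mp h _ (sub_mem n'.2 n.2) ?_)
    rw [show (n' : M) - n = φ n - ψ n' by rw [sub_eq_sub_iff_add_eq_add, hn', add_comm]]
    exact sub_mem (φ n).2 (ψ n').2
  rw [Subtype.ext hnn'] at hn'
  exact (add_left_cancel hn').symm

/- The vertical line test, applied to the pullback of `T` along `N × P → M, (n, p) ↦ n + p`. -/
theorem exists_eq_graphSubmodule {T : Submodule R M} (hTP : Disjoint T P) (hT : T ≤ N ⊔ P)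
    (hN : N ≤ T ⊔ P) : ∃ φ : N →ₗ[R] P, T = graphSubmodule φ := by
  set ι := N.subtype.coprod P.subtype
  have hsurj : Function.Surjective (Prod.fst ∘ (T.comap ι).subtype) := by
    intro n
    obtain ⟨t, ht, p, hp, htp⟩ := Submodule.mem_sup.mp (hN n.2)
    refine ⟨⟨(n, -⟨p, hp⟩), ?_⟩, rfl⟩
    simpa [ι, ← htp] using ht
  have hvert : ∀ x y : T.comap ι, (x : N × P).1 = (y : N × P).1 →
      (x : N × P).2 = (y : N × P).2 := by
    rintro ⟨⟨n, p⟩, hnp⟩ ⟨⟨n', p'⟩, hnp'⟩ (rfl : n = n')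
    have hpp' : (p : M) - p' ∈ T := by
      simpa [ι] using sub_mem hnp hnp'
    exact Subtype.ext (sub_eq_zero.mp (Submodule.disjoint_def.mp hTP _ hpp' (sub_mem p.2 p'.2)))
  obtain ⟨φ, hφ⟩ := LinearMap.exists_range_eq_graph hsurj hvert
  refine ⟨φ, ?_⟩
  rw [graphSubmodule, ← LinearMap.comp_id N.subtype, ← LinearMap.coprod_comp_prod,
    LinearMap.range_comp, ← LinearMap.graph_eq_range_prod, ← hφ, Submodule.range_subtype,
    Submodule.map_comap_eq, LinearMap.range_coprod, Submodule.range_subtype,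
    Submodule.range_subtype, inf_eq_right.mpr hT]

theorem infinite_setOf_ne_bot_and_ne_top (h : Disjoint N P) [Infinite (N →ₗ[R] P)] :
    {K : Submodule R M | K ≠ ⊥ ∧ K ≠ ⊤}.Infinite := by
  refine Infinite.mono ?_
    ((infinite_range_of_injective (graphSubmodule_injective h)).sdiff (toFinite {⊥, ⊤}))
  rintro K ⟨-, hK⟩
  exact ⟨fun h => hK (Or.inl h), fun h => hK (Or.inr h)⟩

end Graph

section Simple

variable {S S' T : Submodule R M}

def endEquivLinearMap (e : S ≃ₗ[R] S') : Module.End R S ≃+ (S →ₗ[R] S') :=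
  LinearEquiv.arrowCongrAddEquiv (LinearEquiv.refl R S) e

theorem socle_eq_sup (hS : IsAtom S) (hS' : IsAtom S') (hall : ∀ T, IsAtom T → T ≤ S ⊔ S') :
    socle R M = S ⊔ S' :=
  le_antisymm (sSup_le fun T hT => hall T (isSimpleModule_iff_isAtom.mp hT))
    (sup_le (le_sSup (isSimpleModule_iff_isAtom.mpr hS))
      (le_sSup (isSimpleModule_iff_isAtom.mpr hS')))

theorem exists_eq_graphSubmodule_of_isAtom (hS : IsAtom S) (hS' : IsAtom S') (hT : IsAtom T)
    (hTS' : T ≠ S') (hTle : T ≤ S ⊔ S') : ∃ φ : S →ₗ[R] S', T = graphSubmodule φ := by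
  refine exists_eq_graphSubmodule (hT.disjoint_of_ne hS' hTS') hTle ?_
  rw [sup_eq_of_isAtom_of_sup_le hT hS' hTS' hS hS' (sup_le hTle le_sup_right)]
  exact le_sup_left

theorem nonempty_linearEquiv_of_isAtom (hS : IsAtom S) (hS' : IsAtom S') (hT : IsAtom T)
    (hTS : T ≠ S) (hTS' : T ≠ S') (hTle : T ≤ S ⊔ S') : Nonempty (S ≃ₗ[R] S') := by
  obtain ⟨φ, rfl⟩ := exists_eq_graphSubmodule_of_isAtom hS hS' hT hTS' hTle
  have hφ : φ ≠ 0 := by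
    rintro rfl
    exact hTS graphSubmodule_zero
  have := isSimpleModule_iff_isAtom.mpr hS
  have := isSimpleModule_iff_isAtom.mpr hS'
  exact ⟨LinearEquiv.ofBijective φ (LinearMap.bijective_of_ne_zero hφ)⟩

theorem infinite_linearMap_of_isAtom (hS : IsAtom S) (hS' : IsAtom S')
    (hall : ∀ T, IsAtom T → T ≤ S ⊔ S') (hinf : {T : Submodule R M | IsAtom T}.Infinite) :
    Infinite (S →ₗ[R] S') := by
  rw [← not_finite_iff_infinite]
  intro hfin
  have : (range (graphSubmodule : (S →ₗ[R] S') → Submodule R M)).Finite := finite_range _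
  refine hinf ((this.insert S').subset fun T hT => ?_)
  by_cases h : T = S'
  · exact Or.inl h
  · obtain ⟨φ, rfl⟩ := exists_eq_graphSubmodule_of_isAtom hS hS' hT h (hall T hT)
    exact Or.inr ⟨φ, rfl⟩

theorem cliqueNumber_lt_aleph0_of_finite (hS : IsAtom S) (hS' : IsAtom S')
    (hfin : {N | ¬ N ≤ S ⊔ S'}.Finite) : cliqueNumber R M < ℵ₀ := by
  set F := insert (S ⊔ S') {N | ¬ N ≤ S ⊔ S'}
  refine (cliqueNumber_le (c := #F + 1) fun C hC => ?_).trans_lt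
    (add_lt_aleph0 (hfin.insert (S ⊔ S')).lt_aleph0 one_lt_aleph0)
  have hatom : ∀ K ∈ C \ F, IsAtom K := by
    rintro K ⟨hKC, hKF⟩
    rcases eq_bot_or_isAtom_or_eq_sup_of_le_sup hS hS' (not_not.mp fun h => hKF (Or.inr h)) with
      h | h | h
    · exact absurd h (hC.1 K hKC).1
    · exact h
    · exact absurd (Or.inl h) hKF
  have hsub : (C \ F).Subsingleton := fun K hK L hL => by_contra fun hKL =>
    hC.2 K hK.1 L hL.1 hKL ((hatom K hK).disjoint_of_ne (hatom L hL) hKL).eq_bot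
  calc #C ≤ #↑(F ∪ C \ F) := mk_le_mk_of_subset (sdiff_subset_iff.mp subset_rfl)
    _ ≤ #F + #↑(C \ F) := mk_union_le _ _
    _ ≤ #F + 1 := add_le_add le_rfl (mk_le_one_iff_set_subsingleton.mpr hsub)

end Simple

end Submodules

/-- For a module `M` the following are equivalent:
(1) `M` has infinitely many nontrivial submodules and `ω(M)` is finite;
(2) (i) there are simple submodules `S ≅ S'` of `M` with `S ⊓ S' = ⊥`,
`Soc(M) = S ⊔ S'`, and `End(S)` an infinite division ring; and
(ii) all but finitely many submodules of `M` are contained in `Soc(M)`. -/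
theorem statement15 {R : Type*} [Ring R] {M : Type*} [AddCommGroup M] [Module R M] :
    ({N : Submodule R M | N ≠ ⊥ ∧ N ≠ ⊤}.Infinite ∧
      cliqueNumber R M < Cardinal.aleph0) ↔
    ((∃ S S' : Submodule R M, IsSimpleModule R S ∧ IsSimpleModule R S' ∧
        Nonempty (S ≃ₗ[R] S') ∧ S ⊓ S' = ⊥ ∧ socle R M = S ⊔ S' ∧
        Infinite (Module.End R S) ∧ (∀ f : Module.End R S, f ≠ 0 → IsUnit f)) ∧
      {N : Submodule R M | ¬ N ≤ socle R M}.Finite) := by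
  constructor
  · rintro ⟨hinf, hω⟩
    have hfin : ∀ A : Submodule R M, A ≠ ⊥ → {K | A ≤ K}.Finite :=
      fun _ => finite_setOf_le_of_cliqueNumber_lt hω
    have := wellFoundedLT_of_cliqueNumber_lt hω
    have hatoms : {T : Submodule R M | IsAtom T}.Infinite :=
      infinite_setOf_isAtom (hinf.mono fun _ h => h.1) fun a ha => hfin a ha.ne_bot
    obtain ⟨S, S', hS, hS', hSS', hall⟩ :=
      exists_isAtom_forall_isAtom_le_sup hatoms fun a ha => hfin a ha.ne_bot
    obtain ⟨T, hT, hTSS'⟩ := (hatoms.sdiff (toFinite {S, S'})).nonempty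
    obtain ⟨e⟩ := nonempty_linearEquiv_of_isAtom hS hS' hT (fun h => hTSS' (Or.inl h))
      (fun h => hTSS' (Or.inr h)) (hall T hT)
    have hsoc := socle_eq_sup hS hS' hall
    have hSimple := isSimpleModule_iff_isAtom.mpr hS
    have hEnd := (endEquivLinearMap e).toEquiv.infinite_iff.mpr
      (infinite_linearMap_of_isAtom hS hS' hall hatoms)
    refine ⟨⟨S, S', hSimple, isSimpleModule_iff_isAtom.mpr hS', ⟨e⟩,
      disjoint_iff.mp (hS.disjoint_of_ne hS' hSS'), hsoc, hEnd,
      fun f hf => (Module.End.isUnit_iff f).mpr (LinearMap.bijective_of_ne_zero hf)⟩,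
      hsoc ▸ finite_setOf_not_le_sup hS hS' hall hfin⟩
  · rintro ⟨⟨S, S', hS, hS', ⟨e⟩, hdisj, hsoc, hinf, -⟩, hfin⟩
    have : Infinite (S →ₗ[R] S') := (endEquivLinearMap e).toEquiv.infinite_iff.mp hinf
    rw [isSimpleModule_iff_isAtom] at hS hS'
    exact ⟨infinite_setOf_ne_bot_and_ne_top (disjoint_iff.mpr hdisj),
      cliqueNumber_lt_aleph0_of_finite hS hS' (hsoc ▸ hfin)⟩
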